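/- arXiv:1406.1433 — 2 statements merged into one kernel-verified Lean document; each statement's English description precedes it below -/
import Mathlib

section
/- Let G be a finite simple graph with vertex set V, let k be a natural number, and let A and B be disjoint subsets of V such that every vertex of A is adjacent in G to every vertex of B. Suppose every independent set of G that is disjoint from A ∪ B has size strictly less than k. If I and J are independent sets of G of size at least k with I ∩ A = ∅ and J ∩ A ≠ ∅, then I and J lie in different connected components of TAR_k(G). -/
/-- A finite set of vertices is independent if no two of its elements are adjacent. -/
def SimpleGraph.IsIndepFinset {V : Type*} (G : SimpleGraph V) (s : Finset V) : Prop :=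
  ∀ ⦃a⦄, a ∈ s → ∀ ⦃b⦄, b ∈ s → a ≠ b → ¬ G.Adj a b

/-- A maximal independent set: an independent set such that no proper superset is independent. -/
def SimpleGraph.IsMaxIndepFinset {V : Type*} (G : SimpleGraph V) (s : Finset V) : Prop :=
  G.IsIndepFinset s ∧ ∀ t : Finset V, G.IsIndepFinset t → s ⊆ t → t = s

/-- The independence number: the largest cardinality of an independent set. -/
noncomputable def SimpleGraph.indepNum' {V : Type*} [Fintype V] (G : SimpleGraph V) : ℕ :=
  sSup {n : ℕ | ∃ s : Finset V, G.IsIndepFinset s ∧ s.card = n}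

/-- The join of two simple graphs: their disjoint union together with all edges
between the two sides. -/
def SimpleGraph.join {α β : Type*} (G : SimpleGraph α) (H : SimpleGraph β) :
    SimpleGraph (α ⊕ β) where
  Adj u v := match u, v with
    | Sum.inl u, Sum.inl v => G.Adj u v
    | Sum.inr u, Sum.inr v => H.Adj u v
    | _, _ => True
  symm := ⟨fun u v => match u, v with
    | Sum.inl u, Sum.inl v => fun h => G.adj_symm h
    | Sum.inr u, Sum.inr v => fun h => H.adj_symm h
    | Sum.inl _, Sum.inr _ | Sum.inr _, Sum.inl _ => fun _ => trivial⟩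
  loopless := ⟨fun u => by cases u <;> simp⟩

/-- The token-addition-removal reconfiguration graph `TAR_k(G)`: its vertices are the
independent sets of `G` of size at least `k`, two of them being adjacent iff they
differ on exactly one vertex. -/
def SimpleGraph.TAR {V : Type*} [DecidableEq V] (G : SimpleGraph V) (k : ℕ) :
    SimpleGraph {I : Finset V // G.IsIndepFinset I ∧ k ≤ I.card} where
  Adj I J := (symmDiff I.1 J.1).card = 1
  symm := ⟨fun I J h => by simpa only [symmDiff_comm] using h⟩
  loopless := ⟨fun I h => by
    simp only [symmDiff_self, Finset.bot_eq_empty, Finset.card_empty] at h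
    exact absurd h (by norm_num)⟩

/-!
Along an edge of `TAR_k(G)` a set avoiding `A` can only gain a vertex of `A` by adding a single
token `a` to a set `X` of size at least `k`. Such an `X` avoids `A`, so by the smallness
hypothesis it meets `B`, and `a` is adjacent to that vertex of `B`: the new set is not
independent. Hence avoiding `A` is invariant on connected components of `TAR_k(G)`.
-/

theorem SimpleGraph.Reachable.of_adj_closed {W : Type*} {H : SimpleGraph W} {p : W → Prop}
    (hp : ∀ ⦃x y⦄, H.Adj x y → p x → p y) {u v : W} (h : H.Reachable u v) (hu : p u) : p v := by
  rw [SimpleGraph.reachable_iff_reflTransGen] at h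
  induction h with
  | refl => exact hu
  | tail _ hadj ih => exact hp hadj ih

theorem Finset.subset_of_card_symmDiff_eq_one {α : Type*} [DecidableEq α] {s t : Finset α}
    {a : α} (h : (symmDiff s t).card = 1) (hat : a ∈ t) (has : a ∉ s) : s ⊆ t := by
  intro b hbs
  by_contra hbt
  have hab : a = b := Finset.card_le_one.mp h.le a (Finset.mem_symmDiff.mpr (Or.inr ⟨hat, has⟩))
    b (Finset.mem_symmDiff.mpr (Or.inl ⟨hbs, hbt⟩))
  exact has (hab ▸ hbs)

section JoinPair

variable {V : Type*} {G : SimpleGraph V} {k : ℕ} {A B : Finset V} [DecidableEq V]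

theorem SimpleGraph.IsIndepFinset.exists_mem_of_inter_eq_empty
    (hsmall : ∀ S : Finset V, G.IsIndepFinset S → S ∩ (A ∪ B) = ∅ → S.card < k)
    {S : Finset V} (hS : G.IsIndepFinset S) (hk : k ≤ S.card) (hSA : S ∩ A = ∅) :
    ∃ b ∈ S, b ∈ B := by
  by_contra! hSB
  have hSAB : S ∩ (A ∪ B) = ∅ := by
    rw [Finset.inter_union_distrib_left, hSA, Finset.empty_union,
      Finset.eq_empty_iff_forall_notMem]
    exact fun b hb => hSB b (Finset.mem_of_mem_inter_left hb) (Finset.mem_of_mem_inter_right hb)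
  exact (hsmall S hS hSAB).not_ge hk

theorem SimpleGraph.TAR.inter_eq_empty_of_adj (hjoin : ∀ a ∈ A, ∀ b ∈ B, G.Adj a b)
    (hsmall : ∀ S : Finset V, G.IsIndepFinset S → S ∩ (A ∪ B) = ∅ → S.card < k)
    {X Y : {I : Finset V // G.IsIndepFinset I ∧ k ≤ I.card}} (hadj : (G.TAR k).Adj X Y)
    (hX : X.1 ∩ A = ∅) : Y.1 ∩ A = ∅ := by
  by_contra hY
  obtain ⟨a, ha⟩ := Finset.nonempty_iff_ne_empty.mpr hY
  obtain ⟨haY, haA⟩ := Finset.mem_inter.mp ha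
  have haX : a ∉ X.1 := fun haX => by simpa [hX] using Finset.mem_inter.mpr ⟨haX, haA⟩
  have hXY : X.1 ⊆ Y.1 := Finset.subset_of_card_symmDiff_eq_one hadj haY haX
  obtain ⟨b, hbX, hbB⟩ := X.2.1.exists_mem_of_inter_eq_empty hsmall X.2.2 hX
  have hab := hjoin a haA b hbB
  exact Y.2.1 haY (hXY hbX) (G.ne_of_adj hab) hab

end JoinPair

theorem tar_not_reachable_of_join_pair_general {V : Type*} [DecidableEq V]
    (G : SimpleGraph V) (k : ℕ) (A B : Finset V)
    (hjoin : ∀ a ∈ A, ∀ b ∈ B, G.Adj a b)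
    (hsmall : ∀ S : Finset V, G.IsIndepFinset S → S ∩ (A ∪ B) = ∅ → S.card < k)
    (I J : Finset V)
    (hI : G.IsIndepFinset I ∧ k ≤ I.card) (hJ : G.IsIndepFinset J ∧ k ≤ J.card)
    (hIA : I ∩ A = ∅) (hJA : J ∩ A ≠ ∅) :
    ¬ (G.TAR k).Reachable ⟨I, hI⟩ ⟨J, hJ⟩ := fun h =>
  hJA (h.of_adj_closed (p := fun X => X.1 ∩ A = ∅)
    (fun _ _ hadj hX => SimpleGraph.TAR.inter_eq_empty_of_adj hjoin hsmall hadj hX) hIA)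

theorem tar_not_reachable_of_join_pair {V : Type*} [Fintype V] [DecidableEq V]
    (G : SimpleGraph V) (k : ℕ) (A B : Finset V) (hdisj : Disjoint A B)
    (hjoin : ∀ a ∈ A, ∀ b ∈ B, G.Adj a b)
    (hsmall : ∀ S : Finset V, G.IsIndepFinset S → S ∩ (A ∪ B) = ∅ → S.card < k)
    (I J : Finset V)
    (hI : G.IsIndepFinset I ∧ k ≤ I.card) (hJ : G.IsIndepFinset J ∧ k ≤ J.card)
    (hIA : I ∩ A = ∅) (hJA : J ∩ A ≠ ∅) :
    ¬ (G.TAR k).Reachable ⟨I, hI⟩ ⟨J, hJ⟩ :=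
  tar_not_reachable_of_join_pair_general G k A B hjoin hsmall I J hI hJ hIA hJA
end

section
/- Let G be a finite simple graph with vertex set V, let k be a natural number, and let B be a nonempty subset of V that is an independent set of G and a module of G (every vertex of V \ B is adjacent either to all vertices of B or to none of them). Let N(B) denote the set of vertices of V \ B adjacent to some vertex of B. Suppose that no maximal independent set of the subgraph of G induced by V \ (B ∪ N(B)) has cardinality lying in the interval [k − |B|, k − 1]. Then every independent set I of G with |I| ≥ k and I ∩ B ≠ ∅ lies in the same connected component of TAR_k(G) as some independent set of size at least k that is disjoint from B. -/
/-!
An independent set `I` meeting the module `B` contains no vertex of `N(B)`, so `I ⊆ B ∪ R`.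
Extend `I ∩ R` to a maximal independent set `T` of `G[R]`. Since `|I| ≤ |B| + |T|`, the gap
hypothesis forces `|T| ≥ k`. No vertex of `R` sees `B`, so `B ∪ T` is independent, and
`TAR_k(G)` connects `I` to `B ∪ T` by adding vertices, then `B ∪ T` to `T` by deleting those
of `B`; all sets along the way contain `I` or `T`, hence have size at least `k`.
-/

namespace SimpleGraph

variable {V : Type*} {G : SimpleGraph V}

theorem IsIndepFinset.mono {s t : Finset V} (ht : G.IsIndepFinset t) (hst : s ⊆ t) :
    G.IsIndepFinset s :=
  fun _ ha _ hb hab => ht (hst ha) (hst hb) hab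

theorem IsIndepFinset.union [DecidableEq V] {s t : Finset V} (hs : G.IsIndepFinset s)
    (ht : G.IsIndepFinset t) (hst : ∀ a ∈ s, ∀ b ∈ t, ¬ G.Adj a b) :
    G.IsIndepFinset (s ∪ t) := by
  intro a ha b hb hab hadj
  rcases Finset.mem_union.mp ha with ha | ha <;> rcases Finset.mem_union.mp hb with hb | hb
  · exact hs ha hb hab hadj
  · exact hst a ha b hb hadj
  · exact hst b hb a ha hadj.symm
  · exact ht ha hb hab hadj

theorem IsIndepFinset.not_adj_of_isModule {I B : Finset V} (hI : G.IsIndepFinset I)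
    (hB : ∀ v, v ∉ B → (∀ w ∈ B, G.Adj v w) ∨ (∀ w ∈ B, ¬ G.Adj v w))
    {b : V} (hbI : b ∈ I) (hbB : b ∈ B) {v : V} (hvI : v ∈ I) (hvB : v ∉ B) :
    ∀ w ∈ B, ¬ G.Adj v w :=
  (hB v hvB).resolve_left fun hall => hI hvI hbI (ne_of_mem_of_not_mem hbB hvB).symm (hall b hbB)

theorem IsIndepFinset.exists_maximal_superset_within {S R : Finset V}
    (hS : G.IsIndepFinset S) (hSR : S ⊆ R) :
    ∃ T, S ⊆ T ∧ T ⊆ R ∧ G.IsIndepFinset T ∧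
      ∀ T' : Finset V, T' ⊆ R → G.IsIndepFinset T' → T ⊆ T' → T' = T := by
  have hfin : {T : Finset V | T ⊆ R ∧ G.IsIndepFinset T}.Finite :=
    R.powerset.finite_toSet.subset fun T hT => Finset.mem_powerset.mpr hT.1
  obtain ⟨T, hST, hmax⟩ := hfin.exists_le_maximal ⟨hSR, hS⟩
  exact ⟨T, hST, hmax.prop.1, hmax.prop.2, fun T' hT'R hT' => hmax.eq_of_ge ⟨hT'R, hT'⟩⟩

theorem TAR.adj_of_erase [DecidableEq V] {k : ℕ}
    {I J : {I : Finset V // G.IsIndepFinset I ∧ k ≤ I.card}} {x : V}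
    (hx : x ∈ J.1) (hIJ : J.1.erase x = I.1) : (G.TAR k).Adj I J := by
  show (symmDiff I.1 J.1).card = 1
  rw [symmDiff_of_le (hIJ ▸ Finset.erase_subset x J.1), ← hIJ, Finset.sdiff_erase_self hx,
    Finset.card_singleton]

theorem TAR.reachable_of_subset [DecidableEq V] {k : ℕ}
    (I J : {I : Finset V // G.IsIndepFinset I ∧ k ≤ I.card}) (hIJ : I.1 ⊆ J.1) :
    (G.TAR k).Reachable I J := by
  obtain ⟨J, hJ, hkJ⟩ := J
  induction J using Finset.strongInduction with
  | H J ih =>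
    rcases hIJ.eq_or_ssubset with rfl | hlt
    · rfl
    obtain ⟨x, hxJ, hxI⟩ := Finset.exists_of_ssubset hlt
    have hIJ' : I.1 ⊆ J.erase x := Finset.subset_erase.mpr ⟨hIJ, hxI⟩
    have hkJ' : k ≤ (J.erase x).card := I.2.2.trans (Finset.card_le_card hIJ')
    exact (ih _ (Finset.erase_ssubset hxJ) (hJ.mono (Finset.erase_subset x J)) hkJ' hIJ').trans
      (TAR.adj_of_erase hxJ rfl).reachable

end SimpleGraph

theorem tar_reach_indep_avoiding_module_general {V : Type*} [Fintype V] [DecidableEq V]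
    (G : SimpleGraph V) [DecidableRel G.Adj] (k : ℕ)
    (B : Finset V) (hBind : G.IsIndepFinset B)
    (hBmod : ∀ v : V, v ∉ B → (∀ w ∈ B, G.Adj v w) ∨ (∀ w ∈ B, ¬ G.Adj v w))
    (NB : Finset V) (hNB : NB = Finset.univ.filter fun v => v ∉ B ∧ ∃ b ∈ B, G.Adj v b)
    (R : Finset V) (hR : R = Finset.univ \ (B ∪ NB))
    (hno : ∀ S : Finset V, S ⊆ R → G.IsIndepFinset S →
      (∀ T : Finset V, T ⊆ R → G.IsIndepFinset T → S ⊆ T → T = S) →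
      ¬ (k - B.card ≤ S.card ∧ S.card ≤ k - 1))
    (I : Finset V) (hI : G.IsIndepFinset I ∧ k ≤ I.card) (hIB : I ∩ B ≠ ∅) :
    ∃ (K : Finset V) (hK : G.IsIndepFinset K ∧ k ≤ K.card),
      K ∩ B = ∅ ∧ (G.TAR k).Reachable ⟨I, hI⟩ ⟨K, hK⟩ := by
  open Finset SimpleGraph in
  have mem_R : ∀ v, v ∈ R ↔ v ∉ B ∧ ∀ b ∈ B, ¬ G.Adj v b := by
    intro v; subst hR hNB; simp [not_or]; tauto
  obtain ⟨b, hb⟩ := nonempty_iff_ne_empty.mpr hIB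
  have hIBR : I ⊆ B ∪ R := fun v hv => by
    by_cases hvB : v ∈ B
    · exact mem_union_left _ hvB
    · exact mem_union_right _ <| (mem_R v).mpr
        ⟨hvB, hI.1.not_adj_of_isModule hBmod (mem_inter.mp hb).1 (mem_inter.mp hb).2 hv hvB⟩
  obtain ⟨T, hIT, hTR, hT, hTmax⟩ :=
    (hI.1.mono inter_subset_left).exists_maximal_superset_within
      (inter_subset_right : I ∩ R ⊆ R)
  have hIBT : I ⊆ B ∪ T := fun v hv => by
    rcases mem_union.mp (hIBR hv) with hvB | hvR
    · exact mem_union_left _ hvB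
    · exact mem_union_right _ (hIT (mem_inter.mpr ⟨hv, hvR⟩))
  have hkT : k ≤ T.card := by
    have := hno T hTR hT hTmax
    have := card_le_card hIBT
    have := card_union_le B T
    omega
  have hBT : G.IsIndepFinset (B ∪ T) :=
    hBind.union hT fun b hb t ht hbt => ((mem_R t).mp (hTR ht)).2 b hb hbt.symm
  refine ⟨T, ⟨hT, hkT⟩, disjoint_iff_inter_eq_empty.mp <| disjoint_left.mpr
    fun t ht => ((mem_R t).mp (hTR ht)).1, ?_⟩
  have hkBT : k ≤ (B ∪ T).card := hkT.trans (card_le_card subset_union_right)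
  exact (TAR.reachable_of_subset ⟨I, hI⟩ ⟨B ∪ T, hBT, hkBT⟩ hIBT).trans
    (TAR.reachable_of_subset _ _ subset_union_right).symm

theorem tar_reach_indep_avoiding_module {V : Type*} [Fintype V] [DecidableEq V]
    (G : SimpleGraph V) [DecidableRel G.Adj] (k : ℕ)
    (B : Finset V) (hBne : B.Nonempty) (hBind : G.IsIndepFinset B)
    (hBmod : ∀ v : V, v ∉ B → (∀ w ∈ B, G.Adj v w) ∨ (∀ w ∈ B, ¬ G.Adj v w))
    (NB : Finset V) (hNB : NB = Finset.univ.filter fun v => v ∉ B ∧ ∃ b ∈ B, G.Adj v b)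
    (R : Finset V) (hR : R = Finset.univ \ (B ∪ NB))
    (hno : ∀ S : Finset V, S ⊆ R → G.IsIndepFinset S →
      (∀ T : Finset V, T ⊆ R → G.IsIndepFinset T → S ⊆ T → T = S) →
      ¬ (k - B.card ≤ S.card ∧ S.card ≤ k - 1))
    (I : Finset V) (hI : G.IsIndepFinset I ∧ k ≤ I.card) (hIB : I ∩ B ≠ ∅) :
    ∃ (K : Finset V) (hK : G.IsIndepFinset K ∧ k ≤ K.card),
      K ∩ B = ∅ ∧ (G.TAR k).Reachable ⟨I, hI⟩ ⟨K, hK⟩ :=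
  tar_reach_indep_avoiding_module_general G k B hBind hBmod NB hNB R hR hno I hI hIB
end
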